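/- arXiv:2507.02526 — 4 statements merged into one kernel-verified Lean document; each statement's English description precedes it below -/
import Mathlib

section
/- Suppose n ≥ 3 and (a_0,...,a_{n-2}) and (a_1,...,a_{n-1}) are both symmetric (n-1)-tuples over Z_k. Then either both tuples are uniform, or n is even and both tuples are alternating. -/
/-!
Reflecting the first tuple about its centre (`i ↦ m - i`) and then the second one
(`j ↦ m + 2 - j`) translates indices by two, so `a i = a (i + 2)` on the whole range
`0, …, m + 1`: the sequence is determined by `a 0` and `a 1`. If these agree, both tuples are
uniform. Otherwise the symmetry `a 0 = a m` of the first tuple forces `m` to be even, and both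
tuples alternate.
-/

variable {α : Type*} {a : ℕ → α}

theorem eq_add_two_of_reflections {m : ℕ}
    (hA : ∀ i, i ≤ m → a i = a (m - i))
    (hB : ∀ i, i ≤ m → a (1 + i) = a (1 + (m - i))) :
    ∀ i, i + 2 ≤ m + 1 → a i = a (i + 2) := by
  intro i hi
  have hB' := hB (m - i - 1) (by omega)
  rw [show 1 + (m - i - 1) = m - i by omega,
    show 1 + (m - (m - i - 1)) = i + 2 by omega] at hB'
  exact (hA i (by omega)).trans hB'

theorem eq_mod_two_of_eq_add_two {N : ℕ} (h : ∀ i, i + 2 ≤ N → a i = a (i + 2)) :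
    ∀ i, i ≤ N → a i = a (i % 2) := by
  intro i
  induction i using Nat.strong_induction_on with
  | _ i ih =>
    intro hi
    rcases Nat.lt_or_ge i 2 with hlt | hge
    · rw [Nat.mod_eq_of_lt hlt]
    · obtain ⟨j, rfl⟩ := Nat.exists_eq_add_of_le' hge
      rw [← h j hi, ih j (by omega) (by omega), Nat.add_mod_right]

theorem consecutive_symmetric_tuples_general
    (n k : ℕ) (hn : 3 ≤ n) (a : ℕ → ZMod k)
    (hsymA : ∀ i, i ≤ n - 2 → a i = a (n - 2 - i))
    (hsymB : ∀ i, i ≤ n - 2 → a (1 + i) = a (1 + (n - 2 - i))) :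
    ((∀ i j, i ≤ n - 2 → j ≤ n - 2 → a i = a j) ∧
     (∀ i j, i ≤ n - 2 → j ≤ n - 2 → a (1 + i) = a (1 + j))) ∨
    (Even n ∧
     ((¬ ∀ i j, i ≤ n - 2 → j ≤ n - 2 → a i = a j) ∧
       ∀ i j, i ≤ n - 2 → j ≤ n - 2 → i % 2 = j % 2 → a i = a j) ∧
     ((¬ ∀ i j, i ≤ n - 2 → j ≤ n - 2 → a (1 + i) = a (1 + j)) ∧
       ∀ i j, i ≤ n - 2 → j ≤ n - 2 → i % 2 = j % 2 → a (1 + i) = a (1 + j))) := by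
  have hmod := eq_mod_two_of_eq_add_two (eq_add_two_of_reflections hsymA hsymB)
  by_cases h01 : a 0 = a 1
  · have hconst : ∀ i, i ≤ n - 2 + 1 → a i = a 0 := fun i hi => by
      rcases Nat.mod_two_eq_zero_or_one i with h | h <;> simp [hmod i hi, h, h01]
    left
    exact ⟨fun i j hi hj => (hconst i (by omega)).trans (hconst j (by omega)).symm,
      fun i j hi hj => (hconst (1 + i) (by omega)).trans (hconst (1 + j) (by omega)).symm⟩
  · have hn_even : Even n := by
      by_contra hodd
      have hm : (n - 2) % 2 = 1 := by rw [Nat.not_even_iff] at hodd; omega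
      exact h01 ((hsymA 0 (Nat.zero_le _)).trans (by rw [Nat.sub_zero, hmod (n - 2) (by omega), hm]))
    have h20 : a 2 = a 0 := hmod 2 (by omega)
    right
    refine ⟨hn_even, ⟨fun h => h01 (h 0 1 (by omega) (by omega)), fun i j hi hj hij => ?_⟩,
      ⟨fun h => h01 (h20 ▸ (h 0 1 (by omega) (by omega)).symm), fun i j hi hj hij => ?_⟩⟩
    · rw [hmod i (by omega), hmod j (by omega), hij]
    · rw [hmod (1 + i) (by omega), hmod (1 + j) (by omega), Nat.add_mod, hij, ← Nat.add_mod]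

/-- If `n ≥ 3` and the `(n-1)`-tuples `(a 0, ..., a (n-2))` and `(a 1, ..., a (n-1))`
over `ZMod k` are both symmetric, then either both tuples are uniform, or `n` is even
and both tuples are alternating. -/
theorem consecutive_symmetric_tuples
    (n k : ℕ) (hn : 3 ≤ n) (hk : 2 ≤ k) (a : ℕ → ZMod k)
    (hsymA : ∀ i, i ≤ n - 2 → a i = a (n - 2 - i))
    (hsymB : ∀ i, i ≤ n - 2 → a (1 + i) = a (1 + (n - 2 - i))) :
    ((∀ i j, i ≤ n - 2 → j ≤ n - 2 → a i = a j) ∧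
     (∀ i j, i ≤ n - 2 → j ≤ n - 2 → a (1 + i) = a (1 + j))) ∨
    (Even n ∧
     ((¬ ∀ i j, i ≤ n - 2 → j ≤ n - 2 → a i = a j) ∧
       ∀ i j, i ≤ n - 2 → j ≤ n - 2 → i % 2 = j % 2 → a i = a j) ∧
     ((¬ ∀ i j, i ≤ n - 2 → j ≤ n - 2 → a (1 + i) = a (1 + j)) ∧
       ∀ i j, i ≤ n - 2 → j ≤ n - 2 → i % 2 = j % 2 → a (1 + i) = a (1 + j))) :=
  consecutive_symmetric_tuples_general n k hn a hsymA hsymB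
end

section
/- Suppose n ≥ 5, the (n-1)-tuple (a_0,...,a_{n-2}) over Z_k is symmetric, and the (n-1)-tuple (a_1,...,a_{n-1}) is right-semi-symmetric. Then the sequence a_0,...,a_{n-1} is periodic with period 3, i.e., a_i = a_{i+3} for all 0 ≤ i ≤ n-4. Moreover, writing c_j = a_j for j = 0,1,2: if n ≡ 0 (mod 3) then c_0 = c_1; if n ≡ 1 (mod 3) then c_0 = c_2; if n ≡ 2 (mod 3) then c_1 = c_2. -/
/-! In terms of `a`, symmetry of `(a 0, …, a (n-2))` is the reflection `i ↦ n - 2 - i` and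
right-semi-symmetry of `(a 1, …, a (n-1))` is the reflection `j ↦ n + 1 - j`; their composite
is the translation `i ↦ i + 3`. So `a` is `3`-periodic on `[0, n-1]`, and the three congruence
cases come from reading `a 0 = a (n-2)` and `a 1 = a (n-3)` modulo `3`. -/

section

variable {α : Type*} {a : ℕ → α}

theorem apply_eq_apply_add_three_of_reflections {n : ℕ}
    (hsym : ∀ i, i ≤ n - 2 → a i = a (n - 2 - i))
    (hsemi : ∀ i, 1 ≤ i → i ≤ n - 2 → a (1 + i) = a (1 + (n - 1 - i)))
    {i : ℕ} (hi : i + 4 ≤ n) : a i = a (i + 3) := by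
  have hreflect := hsemi (n - 3 - i) (by omega) (by omega)
  rw [show 1 + (n - 3 - i) = n - 2 - i by omega,
    show 1 + (n - 1 - (n - 3 - i)) = i + 3 by omega] at hreflect
  exact (hsym i (by omega)).trans hreflect

theorem apply_add_mul_eq_of_periodic_le {p M r : ℕ} (hper : ∀ i, i + p ≤ M → a i = a (i + p)) :
    ∀ q, r + p * q ≤ M → a (r + p * q) = a r
  | 0, _ => rfl
  | q + 1, hq => by
    rw [mul_add_one, ← add_assoc] at hq ⊢
    rw [← hper _ hq, apply_add_mul_eq_of_periodic_le hper q (by omega)]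

theorem apply_eq_apply_mod_of_periodic_le {p M j : ℕ} (hper : ∀ i, i + p ≤ M → a i = a (i + p))
    (hj : j ≤ M) : a j = a (j % p) := by
  rw [← Nat.mod_add_div j p] at hj ⊢
  rw [apply_add_mul_eq_of_periodic_le hper _ hj, Nat.mod_add_div]

end

theorem symmetric_and_right_semi_symmetric_period_three_general
    (n k : ℕ) (hn : 5 ≤ n) (a : ℕ → ZMod k)
    (hsymA : ∀ i, i ≤ n - 2 → a i = a (n - 2 - i))
    (hrightB : ∀ i, 1 ≤ i → i ≤ n - 2 → a (1 + i) = a (1 + (n - 1 - i))) :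
    (∀ i, i ≤ n - 4 → a i = a (i + 3)) ∧
    (n % 3 = 0 → a 0 = a 1) ∧
    (n % 3 = 1 → a 0 = a 2) ∧
    (n % 3 = 2 → a 1 = a 2) := by
  have hper : ∀ i, i ≤ n - 4 → a i = a (i + 3) := fun i hi =>
    apply_eq_apply_add_three_of_reflections hsymA hrightB (by omega)
  have hmod : ∀ j, j ≤ n - 1 → a j = a (j % 3) := fun j hj =>
    apply_eq_apply_mod_of_periodic_le (fun i hi => hper i (by omega)) hj
  have h0 : a 0 = a ((n - 2) % 3) := by
    rw [hsymA 0 (by omega), Nat.sub_zero]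
    exact hmod _ (by omega)
  have h1 : a 1 = a ((n - 3) % 3) := (hsymA 1 (by omega)).trans (hmod _ (by omega))
  refine ⟨hper, fun h => ?_, fun h => ?_, fun h => ?_⟩
  · rwa [show (n - 2) % 3 = 1 by omega] at h0
  · rwa [show (n - 2) % 3 = 2 by omega] at h0
  · rwa [show (n - 3) % 3 = 2 by omega] at h1

/-- If `n ≥ 5`, the `(n-1)`-tuple `(a 0, ..., a (n-2))` over `ZMod k` is symmetric and
the `(n-1)`-tuple `(a 1, ..., a (n-1))` is right-semi-symmetric, then `a i = a (i+3)`
for `i ≤ n-4`, and: if `n ≡ 0 (mod 3)` then `a 0 = a 1`; if `n ≡ 1 (mod 3)` then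
`a 0 = a 2`; if `n ≡ 2 (mod 3)` then `a 1 = a 2`. -/
theorem symmetric_and_right_semi_symmetric_period_three
    (n k : ℕ) (hn : 5 ≤ n) (hk : 2 ≤ k) (a : ℕ → ZMod k)
    (hsymA : ∀ i, i ≤ n - 2 → a i = a (n - 2 - i))
    (hrightB : ∀ i, 1 ≤ i → i ≤ n - 2 → a (1 + i) = a (1 + (n - 1 - i))) :
    (∀ i, i ≤ n - 4 → a i = a (i + 3)) ∧
    (n % 3 = 0 → a 0 = a 1) ∧
    (n % 3 = 1 → a 0 = a 2) ∧
    (n % 3 = 2 → a 1 = a 2) :=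
  symmetric_and_right_semi_symmetric_period_three_general n k hn a hsymA hrightB
end

section
/- For n ≥ 3 and k ≥ 2, the number of k-ary n-tuples that are left-semi-symmetric, non-uniform, and non-alternating is k^{(n+2)/2} - k^2 if n is even, and k^{(n+1)/2} - k if n is odd. -/
/-!
A left-semi-symmetric tuple is constant on the classes `{i, n - 2 - i}` (`i ≤ n - 2`) and `{n - 1}`,
of which there are `n / 2 + 1`, so there are `k ^ (n / 2 + 1)` of them. Uniform tuples are
`2`-periodic, so the tuples to be counted are the left-semi-symmetric ones minus the `2`-periodic
left-semi-symmetric ones. For even `n` every `2`-periodic tuple is left-semi-symmetric (`k ^ 2` of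
them); for odd `n` the symmetry links an even and an odd position, so only the `k` uniform tuples
remain.
-/

open Function

lemma Nat.card_subtype_and_not {β : Type*} [Finite β] (p q : β → Prop) :
    Nat.card {x // p x ∧ ¬ q x} = Nat.card {x // p x} - Nat.card {x // p x ∧ q x} := by
  have hsub : {x | p x ∧ q x} ⊆ {x | p x} := fun x hx => hx.1
  calc Nat.card {x // p x ∧ ¬ q x} = Nat.card ↥({x | p x} \ {x | p x ∧ q x}) :=
        Nat.card_congr (Equiv.subtypeEquivRight fun x => by
          simp only [Set.mem_sdiff, Set.mem_ofPred_eq]; tauto)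
    _ = _ := by rw [Nat.card_coe_set_eq, Set.ncard_sdiff hsub]; rfl

lemma Function.Surjective.card_subtype_factorsThrough {ι κ α : Type*} [Finite κ] {f : ι → κ}
    (hf : Surjective f) :
    Nat.card {a : ι → α // a.FactorsThrough f} = Nat.card α ^ Nat.card κ := by
  let e : {a : ι → α // a.FactorsThrough f} ≃ (κ → α) :=
    { toFun := fun a => a.1 ∘ surjInv hf
      invFun := fun b => ⟨b ∘ f, fun _ _ h => congrArg b h⟩
      left_inv := fun a => Subtype.ext <| funext fun i => a.2 (surjInv_eq hf (f i))
      right_inv := fun b => funext fun j => congrArg b (surjInv_eq hf j) }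
  rw [Nat.card_congr e, Nat.card_fun]

section Tuples

variable {α : Type*} {n : ℕ}

def IsLeftSemiSymmetric (a : Fin n → α) : Prop :=
  ∀ i j : Fin n, (i : ℕ) + (j : ℕ) = n - 2 → a i = a j

def IsUniform (a : Fin n → α) : Prop :=
  ∀ i j : Fin n, a i = a j

def IsTwoPeriodic (a : Fin n → α) : Prop :=
  ∀ i j : Fin n, (i : ℕ) % 2 = (j : ℕ) % 2 → a i = a j

def IsAlternating (a : Fin n → α) : Prop :=
  ¬ IsUniform a ∧ IsTwoPeriodic a

/-- The class of `i` under `i ~ n - 2 - i`; the last position `n - 1` forms a class of its own. -/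
def leftSemiSymmetryClass (n : ℕ) (i : Fin n) : Fin (n / 2 + 1) :=
  if (i : ℕ) = n - 1 then Fin.last _ else ⟨min i (n - 2 - i), by omega⟩

lemma leftSemiSymmetryClass_eq_iff {i j : Fin n} :
    leftSemiSymmetryClass n i = leftSemiSymmetryClass n j ↔ i = j ∨ (i : ℕ) + j = n - 2 := by
  unfold leftSemiSymmetryClass
  split_ifs <;> simp only [Fin.ext_iff, Fin.val_last, true_iff] <;> omega

lemma leftSemiSymmetryClass_surjective (hn : 1 ≤ n) : Surjective (leftSemiSymmetryClass n) := by
  intro c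
  by_cases hc : (c : ℕ) = n / 2
  · exact ⟨⟨n - 1, by omega⟩, by simp [leftSemiSymmetryClass, Fin.ext_iff, hc]⟩
  · refine ⟨⟨c, by omega⟩, ?_⟩
    simp only [leftSemiSymmetryClass, Fin.ext_iff]
    split_ifs <;> simp <;> omega

lemma isLeftSemiSymmetric_iff_factorsThrough (a : Fin n → α) :
    IsLeftSemiSymmetric a ↔ a.FactorsThrough (leftSemiSymmetryClass n) := by
  refine ⟨fun h i j hij => ?_, fun h i j hij => h (leftSemiSymmetryClass_eq_iff.2 (.inr hij))⟩
  rcases leftSemiSymmetryClass_eq_iff.1 hij with rfl | hij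
  exacts [rfl, h i j hij]

lemma isTwoPeriodic_iff_factorsThrough (a : Fin n → α) :
    IsTwoPeriodic a ↔ a.FactorsThrough fun i : Fin n => (⟨i % 2, by omega⟩ : Fin 2) := by
  simp only [IsTwoPeriodic, FactorsThrough, Fin.mk.injEq]

lemma isUniform_iff_factorsThrough (a : Fin n → α) :
    IsUniform a ↔ a.FactorsThrough fun _ : Fin n => () :=
  ⟨fun h i j _ => h i j, fun h _ _ => h rfl⟩

lemma IsUniform.isTwoPeriodic {a : Fin n → α} (h : IsUniform a) : IsTwoPeriodic a :=
  fun i j _ => h i j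

lemma IsTwoPeriodic.isLeftSemiSymmetric {a : Fin n → α} (hn : Even n) (h : IsTwoPeriodic a) :
    IsLeftSemiSymmetric a := by
  obtain ⟨m, rfl⟩ := hn
  exact fun i j hij => h i j (by omega)

/-- For odd `n` the positions `0` and `n - 2` have different parities. -/
lemma IsLeftSemiSymmetric.isUniform_of_odd {a : Fin n → α} (hn : Odd n) (h3 : 3 ≤ n)
    (hs : IsLeftSemiSymmetric a) (hp : IsTwoPeriodic a) : IsUniform a := by
  obtain ⟨m, rfl⟩ := hn
  have h0 : a ⟨0, by omega⟩ = a ⟨2 * m - 1, by omega⟩ := hs _ _ (by simp)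
  have hfirst : ∀ i, a i = a ⟨0, by omega⟩ := by
    intro i
    rcases Nat.mod_two_eq_zero_or_one i with hi | hi
    · exact hp _ _ (by simpa using hi)
    · exact (hp _ _ (by simp; omega)).trans h0.symm
  exact fun i j => (hfirst i).trans (hfirst j).symm

lemma isLeftSemiSymmetric_nonuniform_nonalternating_iff (a : Fin n → α) :
    IsLeftSemiSymmetric a ∧ ¬ IsUniform a ∧ ¬ IsAlternating a ↔
      IsLeftSemiSymmetric a ∧ ¬ IsTwoPeriodic a := by
  have := @IsUniform.isTwoPeriodic _ _ a
  unfold IsAlternating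
  tauto

lemma card_isLeftSemiSymmetric (hn : 1 ≤ n) :
    Nat.card {a : Fin n → α // IsLeftSemiSymmetric a} = Nat.card α ^ (n / 2 + 1) := by
  simp only [isLeftSemiSymmetric_iff_factorsThrough,
    (leftSemiSymmetryClass_surjective hn).card_subtype_factorsThrough, Nat.card_eq_fintype_card,
    Fintype.card_fin]

lemma card_isLeftSemiSymmetric_isTwoPeriodic_of_even (hn : Even n) (h2 : 2 ≤ n) :
    Nat.card {a : Fin n → α // IsLeftSemiSymmetric a ∧ IsTwoPeriodic a} = Nat.card α ^ 2 := by
  have hsurj : Surjective fun i : Fin n => (⟨i % 2, by omega⟩ : Fin 2) :=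
    fun c => ⟨⟨c, by omega⟩, Fin.ext (Nat.mod_eq_of_lt c.2)⟩
  rw [Nat.card_congr (Equiv.subtypeEquivRight fun a =>
      and_iff_right_of_imp (IsTwoPeriodic.isLeftSemiSymmetric hn))]
  simp only [isTwoPeriodic_iff_factorsThrough, hsurj.card_subtype_factorsThrough,
    Nat.card_eq_fintype_card, Fintype.card_fin]

lemma card_isLeftSemiSymmetric_isTwoPeriodic_of_odd (hn : Odd n) (h3 : 3 ≤ n) :
    Nat.card {a : Fin n → α // IsLeftSemiSymmetric a ∧ IsTwoPeriodic a} = Nat.card α := by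
  have hsurj : Surjective fun _ : Fin n => () := fun _ => ⟨⟨0, by omega⟩, rfl⟩
  rw [Nat.card_congr (Equiv.subtypeEquivRight fun a =>
      ⟨fun h => h.1.isUniform_of_odd hn h3 h.2, fun h =>
        ⟨fun i j _ => h i j, h.isTwoPeriodic⟩⟩)]
  simp only [isUniform_iff_factorsThrough, hsurj.card_subtype_factorsThrough, Nat.card_unique,
    pow_one]

end Tuples

/-- For `n ≥ 3` and `k ≥ 2`, the number of `k`-ary `n`-tuples that are
left-semi-symmetric, non-uniform and non-alternating is `k^((n+2)/2) - k^2` if `n`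
is even and `k^((n+1)/2) - k` if `n` is odd. -/
theorem card_left_semi_symmetric_nonuniform_nonalternating
    (n k : ℕ) (hn : 3 ≤ n) (hk : 2 ≤ k) :
    Nat.card {a : Fin n → ZMod k //
      (∀ i j : Fin n, (i : ℕ) + (j : ℕ) = n - 2 → a i = a j) ∧
      (¬ ∀ i j : Fin n, a i = a j) ∧
      ¬ ((¬ ∀ i j : Fin n, a i = a j) ∧
         ∀ i j : Fin n, (i : ℕ) % 2 = (j : ℕ) % 2 → a i = a j)} =
    if Even n then k ^ ((n + 2) / 2) - k ^ 2 else k ^ ((n + 1) / 2) - k := by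
  have : NeZero k := ⟨by omega⟩
  change Nat.card {a : Fin n → ZMod k // IsLeftSemiSymmetric a ∧ ¬ IsUniform a ∧ ¬ IsAlternating a}
    = _
  rw [Nat.card_congr (Equiv.subtypeEquivRight isLeftSemiSymmetric_nonuniform_nonalternating_iff),
    Nat.card_subtype_and_not, card_isLeftSemiSymmetric (by omega)]
  split_ifs with hev
  · rw [card_isLeftSemiSymmetric_isTwoPeriodic_of_even hev (by omega), Nat.card_zmod]
    congr 2
    omega
  · have hodd := Nat.not_even_iff_odd.1 hev
    rw [card_isLeftSemiSymmetric_isTwoPeriodic_of_odd hodd hn, Nat.card_zmod]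
    obtain ⟨m, rfl⟩ := hodd
    congr 2
    omega
end

section
/- For n ≥ 2, k ≥ 3, and 1 ≤ t ≤ n/2, define the set A_k(n,t) of k-ary n-tuples (a_0,...,a_{n-1}) such that (a_{n-t} + ... + a_{n-1}) - (a_0 + ... + a_{t-1}) lies in {1, 2, ..., ⌊(k-1)/2⌋} (computed in Z_k). Then A_k(n,t) is antisymmetric: if a tuple s is in A_k(n,t), then its reverse s^R is not in A_k(n,t). -/
/-! Reversing a tuple swaps the sum of its first `t` entries with the sum of its last `t`
entries, so it negates the difference `D`. On `ZMod k` with `D ≠ 0` we have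
`(-D).val = k - D.val`, which lies above `(k - 1) / 2` whenever `D.val` does not. -/

open Finset

theorem sum_range_comp_rev_tail {M : Type*} [AddCommMonoid M] (a : ℕ → M) {n t : ℕ}
    (htn : t ≤ n) : ∑ i ∈ range t, a (n - 1 - (n - t + i)) = ∑ i ∈ range t, a i := by
  rw [← sum_range_reflect a t]
  exact sum_congr rfl fun i hi => congrArg a (by rw [mem_range] at hi; omega)

theorem sum_range_comp_rev_head {M : Type*} [AddCommMonoid M] (a : ℕ → M) {n t : ℕ}
    (htn : t ≤ n) : ∑ i ∈ range t, a (n - 1 - i) = ∑ i ∈ range t, a (n - t + i) := by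
  rw [← sum_range_reflect (fun i => a (n - t + i)) t]
  exact sum_congr rfl fun i hi => congrArg a (by rw [mem_range] at hi; omega)

theorem ZMod.val_neg_notMem_Icc_of_val_mem_Icc {k : ℕ} {x : ZMod k}
    (hx : x.val ∈ Set.Icc 1 ((k - 1) / 2)) : (-x).val ∉ Set.Icc 1 ((k - 1) / 2) := by
  obtain ⟨hx1, hx2⟩ := hx
  rcases Nat.eq_zero_or_pos k with rfl | hk
  · omega
  have : NeZero k := ⟨hk.ne'⟩
  have hx0 : x ≠ 0 := by rintro rfl; simp at hx1
  rw [ZMod.neg_val, if_neg hx0, Set.mem_Icc]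
  have := ZMod.val_lt x
  omega

theorem Aknt_antisymmetric_general (n k t : ℕ) (ht2 : t ≤ n / 2) (a : ℕ → ZMod k)
    (ha : 1 ≤ ((∑ i ∈ Finset.range t, a (n - t + i)) -
               (∑ i ∈ Finset.range t, a i)).val ∧
          ((∑ i ∈ Finset.range t, a (n - t + i)) -
               (∑ i ∈ Finset.range t, a i)).val ≤ (k - 1) / 2) :
    ¬ (1 ≤ ((∑ i ∈ Finset.range t, (fun j => a (n - 1 - j)) (n - t + i)) -
            (∑ i ∈ Finset.range t, (fun j => a (n - 1 - j)) i)).val ∧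
       ((∑ i ∈ Finset.range t, (fun j => a (n - 1 - j)) (n - t + i)) -
            (∑ i ∈ Finset.range t, (fun j => a (n - 1 - j)) i)).val ≤ (k - 1) / 2) := by
  have htn : t ≤ n := ht2.trans (Nat.div_le_self n 2)
  beta_reduce
  rw [sum_range_comp_rev_tail a htn, sum_range_comp_rev_head a htn, ← neg_sub]
  exact ZMod.val_neg_notMem_Icc_of_val_mem_Icc ha

/-- For `n ≥ 2`, `k ≥ 3` and `1 ≤ t ≤ n/2`, the set `A_k(n,t)` of `k`-ary `n`-tuples
with `(a_{n-t} + ... + a_{n-1}) - (a_0 + ... + a_{t-1}) ∈ {1, ..., ⌊(k-1)/2⌋}`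
is antisymmetric: if `s ∈ A_k(n,t)` then its reverse is not in `A_k(n,t)`. -/
theorem Aknt_antisymmetric (n k t : ℕ) (hn : 2 ≤ n) (hk : 3 ≤ k)
    (ht1 : 1 ≤ t) (ht2 : t ≤ n / 2) (a : ℕ → ZMod k)
    (ha : 1 ≤ ((∑ i ∈ Finset.range t, a (n - t + i)) -
               (∑ i ∈ Finset.range t, a i)).val ∧
          ((∑ i ∈ Finset.range t, a (n - t + i)) -
               (∑ i ∈ Finset.range t, a i)).val ≤ (k - 1) / 2) :
    ¬ (1 ≤ ((∑ i ∈ Finset.range t, (fun j => a (n - 1 - j)) (n - t + i)) -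
            (∑ i ∈ Finset.range t, (fun j => a (n - 1 - j)) i)).val ∧
       ((∑ i ∈ Finset.range t, (fun j => a (n - 1 - j)) (n - t + i)) -
            (∑ i ∈ Finset.range t, (fun j => a (n - 1 - j)) i)).val ≤ (k - 1) / 2) :=
  Aknt_antisymmetric_general n k t ht2 a ha
end
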